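/- arXiv:2407.03660 — 2 statements merged into one kernel-verified Lean document; each statement's English description precedes it below -/
import Mathlib

section
/- Let F be a number field of degree d = r₁ + 2r₂ with discriminant absolute value D, and let ζ_F be its Dedekind zeta function. For any integer k, defining Λ_{F,k}(s) = D^s (2π)^{-ds} Γ(s)^d ζ_F(s) ζ_F(s+2k+1), one has Λ_{F,k}(s) = (-1)^{k r₁ + r₂} Λ_{F,k}(-s - 2k) for all complex s where both sides are defined. -/
/-!
Write `Ω(s) = A^{s/2} Γ(s/2)^{r₁} Γ(s)^{r₂}` with `A = D / (π^d 4^{r₂})`, so that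
`Ω(s) ζ_F(s) = Ω(1-s) ζ_F(1-s)`. Legendre's duplication formula at the real places and Euler's
reflection formula at the complex places give
`D^s (2π)^{-ds} Γ(s)^d Ω(1-s) cos(πs/2)^{r₁} sin(πs)^{r₂} = K Ω(s)` with `K` independent of `s`.
Hence `Λ_{F,k}(s) cos(πs/2)^{r₁} sin(πs)^{r₂} = K ζ_F(1-s) ζ_F(s+2k+1)`. The right-hand side is
invariant under `s ↦ -s-2k`, while the trigonometric factor picks up the sign `(-1)^{k r₁ + r₂}`.
-/

open Complex
open scoped Real

namespace Complex

theorem sin_pi_mul_ne_zero {z : ℂ} (hz : ∀ n : ℤ, z ≠ n) : sin (π * z) ≠ 0 := by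
  rw [Ne, sin_eq_zero_iff]
  rintro ⟨n, hn⟩
  exact hz n (mul_left_cancel₀ (ofReal_ne_zero.mpr Real.pi_ne_zero) (by rw [hn, mul_comm]))

theorem cos_div_two_ne_zero_of_sin_ne_zero {x : ℂ} (hx : sin x ≠ 0) : cos (x / 2) ≠ 0 :=
  fun h ↦ hx <| by rw [← mul_div_cancel₀ x two_ne_zero, sin_two_mul, h, mul_zero]

theorem cos_add_int_mul_pi (x : ℂ) (n : ℤ) : cos (x + n * π) = (-1) ^ n * cos x := by
  rw [cos_antiperiodic.add_int_mul_eq, Int.cast_negOnePow]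

/-- Duplication formula at `z / 2` combined with reflection at `(z + 1) / 2`. -/
theorem Gamma_mul_Gamma_one_sub_div_two_mul_cos {z : ℂ} (hz : cos (π * z / 2) ≠ 0) :
    Gamma z * Gamma ((1 - z) / 2) * cos (π * z / 2) * 2 ^ (1 - z) = √π * Gamma (z / 2) := by
  have hdup := Gamma_mul_Gamma_add_half (z / 2)
  have hrefl := Gamma_mul_Gamma_one_sub ((z + 1) / 2)
  rw [show z / 2 + 1 / 2 = (z + 1) / 2 by ring, show 2 * (z / 2) = z by ring] at hdup
  rw [show 1 - (z + 1) / 2 = (1 - z) / 2 by ring,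
    show π * ((z + 1) / 2) = π * z / 2 + π / 2 by ring, sin_add_pi_div_two,
    eq_div_iff hz] at hrefl
  have hsqrt : (√π : ℂ) * √π = π := by exact_mod_cast Real.mul_self_sqrt Real.pi_pos.le
  refine mul_left_cancel₀ (ofReal_ne_zero.mpr (Real.sqrt_ne_zero'.mpr Real.pi_pos)) ?_
  linear_combination Gamma ((1 - z) / 2) * cos (π * z / 2) * hdup.symm + Gamma (z / 2) * hrefl -
    Gamma (z / 2) * hsqrt

end Complex

namespace NumberFieldZeta

noncomputable def scaledDiscriminant (r₁ r₂ : ℕ) (D : ℝ) : ℂ :=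
  (D : ℂ) / ((π : ℂ) ^ (r₁ + 2 * r₂) * 4 ^ r₂)

noncomputable def gammaFactor (r₁ r₂ : ℕ) (D : ℝ) (s : ℂ) : ℂ :=
  scaledDiscriminant r₁ r₂ D ^ (s / 2) * Gamma (s / 2) ^ r₁ * Gamma s ^ r₂

noncomputable def trigFactor (r₁ r₂ : ℕ) (s : ℂ) : ℂ :=
  cos (π * s / 2) ^ r₁ * sin (π * s) ^ r₂

theorem trigFactor_ne_zero (r₁ r₂ : ℕ) {s : ℂ} (hs : sin (π * s) ≠ 0) :
    trigFactor r₁ r₂ s ≠ 0 :=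
  mul_ne_zero (pow_ne_zero _ (cos_div_two_ne_zero_of_sin_ne_zero hs)) (pow_ne_zero _ hs)

theorem trigFactor_neg_sub_two_mul_int (r₁ r₂ : ℕ) (s : ℂ) (k : ℤ) :
    trigFactor r₁ r₂ (-s - 2 * k) = (-1) ^ (k * r₁ + r₂) * trigFactor r₁ r₂ s := by
  have hcos : cos (π * (-s - 2 * k) / 2) = (-1) ^ k * cos (π * s / 2) := by
    rw [← cos_add_int_mul_pi, ← cos_neg]
    ring_nf
  have hsin : sin (π * (-s - 2 * k)) = -sin (π * s) := by
    rw [show π * (-s - 2 * k) = -(π * s) - k * (2 * π) by ring, sin_sub_int_mul_two_pi, sin_neg]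
  rw [trigFactor, trigFactor, hcos, hsin, mul_pow, neg_pow, zpow_add₀ (by norm_num), zpow_mul,
    zpow_natCast, zpow_natCast]
  ring

theorem cpow_mul_two_pi_cpow_mul_scaledDiscriminant_cpow (r₁ r₂ : ℕ) {D : ℝ} (hD : 0 < D)
    (s : ℂ) :
    (D : ℂ) ^ s * (2 * (π : ℂ)) ^ (-((r₁ + 2 * r₂ : ℕ) : ℂ) * s) *
        scaledDiscriminant r₁ r₂ D ^ ((1 - s) / 2) * 2 ^ r₁ =
      scaledDiscriminant r₁ r₂ D ^ (1 / 2 : ℂ) * scaledDiscriminant r₁ r₂ D ^ (s / 2) *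
        ((2 : ℂ) ^ (1 - s)) ^ r₁ := by
  have hA : 0 < D / (π ^ (r₁ + 2 * r₂) * 4 ^ r₂) := by positivity
  have hexp : ∀ {x : ℝ}, 0 < x → ∀ z : ℂ, (x : ℂ) ^ z = exp (Real.log x * z) := fun hx z ↦ by
    rw [cpow_def_of_ne_zero (ofReal_ne_zero.mpr hx.ne'), ofReal_log hx.le]
  have h2 : ∀ z : ℂ, (2 : ℂ) ^ z = exp (Real.log 2 * z) := by exact_mod_cast hexp two_pos
  have hlogA : Real.log (D / (π ^ (r₁ + 2 * r₂) * 4 ^ r₂)) =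
      Real.log D - (r₁ + 2 * r₂) * Real.log π - r₂ * (2 * Real.log 2) := by
    rw [Real.log_div hD.ne' (by positivity), Real.log_mul (by positivity) (by positivity),
      Real.log_pow, Real.log_pow, show (4 : ℝ) = 2 ^ 2 by norm_num, Real.log_pow]
    push_cast
    ring
  rw [scaledDiscriminant, show (D : ℂ) / ((π : ℂ) ^ (r₁ + 2 * r₂) * 4 ^ r₂) =
      ((D / (π ^ (r₁ + 2 * r₂) * 4 ^ r₂) : ℝ) : ℂ) by push_cast; rfl,
    show (2 * π : ℂ) = ((2 * π : ℝ) : ℂ) by push_cast; rfl, ← cpow_natCast (2 : ℂ) r₁]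
  simp only [hexp hD, hexp hA, hexp Real.two_pi_pos, h2, ← exp_nat_mul, ← exp_add, hlogA,
    Real.log_mul two_ne_zero Real.pi_ne_zero]
  congr 1
  push_cast
  ring

theorem cpow_mul_Gamma_pow_mul_gammaFactor_one_sub (r₁ r₂ : ℕ) {D : ℝ} (hD : 0 < D) {s : ℂ}
    (hs : sin (π * s) ≠ 0) :
    (D : ℂ) ^ s * (2 * (π : ℂ)) ^ (-((r₁ + 2 * r₂ : ℕ) : ℂ) * s) * Gamma s ^ (r₁ + 2 * r₂) *
        gammaFactor r₁ r₂ D (1 - s) * trigFactor r₁ r₂ s =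
      scaledDiscriminant r₁ r₂ D ^ (1 / 2 : ℂ) * (√π / 2) ^ r₁ * π ^ r₂ *
        gammaFactor r₁ r₂ D s := by
  set A := scaledDiscriminant r₁ r₂ D
  have hreal : (Gamma s * Gamma ((1 - s) / 2) * cos (π * s / 2) * 2 ^ (1 - s)) ^ r₁ =
      (√π * Gamma (s / 2)) ^ r₁ := by
    rw [Gamma_mul_Gamma_one_sub_div_two_mul_cos (cos_div_two_ne_zero_of_sin_ne_zero hs)]
  have hcomplex : (Gamma s * Gamma (1 - s) * sin (π * s)) ^ r₂ = π ^ r₂ := by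
    rw [Gamma_mul_Gamma_one_sub, div_mul_cancel₀ _ hs]
  have htwo : (2 : ℂ) ^ r₁ * (√π / 2) ^ r₁ = √π ^ r₁ := by
    rw [← mul_pow, mul_div_cancel₀ _ two_ne_zero]
  refine mul_left_cancel₀ (pow_ne_zero r₁ (two_ne_zero : (2 : ℂ) ≠ 0)) ?_
  rw [gammaFactor, gammaFactor, trigFactor]
  linear_combination
    (Gamma s * Gamma ((1 - s) / 2) * cos (π * s / 2)) ^ r₁ *
      (Gamma s * Gamma (1 - s) * sin (π * s)) ^ r₂ * Gamma s ^ r₂ *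
      cpow_mul_two_pi_cpow_mul_scaledDiscriminant_cpow r₁ r₂ hD s +
    A ^ (1 / 2 : ℂ) * A ^ (s / 2) * (Gamma s * Gamma (1 - s) * sin (π * s)) ^ r₂ * Gamma s ^ r₂ *
      hreal +
    A ^ (1 / 2 : ℂ) * A ^ (s / 2) * (√π * Gamma (s / 2)) ^ r₁ * Gamma s ^ r₂ * hcomplex -
    A ^ (1 / 2 : ℂ) * A ^ (s / 2) * π ^ r₂ * Gamma (s / 2) ^ r₁ * Gamma s ^ r₂ * htwo

theorem gammaFactor_ne_zero (r₁ r₂ : ℕ) {D : ℝ} (hD : 0 < D) {s : ℂ} (hs : ∀ m : ℕ, s ≠ -m) :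
    gammaFactor r₁ r₂ D s ≠ 0 := by
  have hA : (0 : ℝ) < D / (π ^ (r₁ + 2 * r₂) * 4 ^ r₂) := by positivity
  have hs2 : ∀ m : ℕ, s / 2 ≠ -m := fun m h ↦ hs (2 * m) (by push_cast; linear_combination 2 * h)
  refine mul_ne_zero (mul_ne_zero (cpow_ne_zero_iff.mpr (.inl ?_)) ?_) ?_
  · rw [scaledDiscriminant]
    exact_mod_cast hA.ne'
  · exact pow_ne_zero _ (Gamma_ne_zero hs2)
  · exact pow_ne_zero _ (Gamma_ne_zero hs)

theorem mul_trigFactor_eq_of_gammaFactor_mul_eq (r₁ r₂ : ℕ) {D : ℝ} (hD : 0 < D) {s : ℂ}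
    (hs : ∀ n : ℤ, s ≠ n) {a b : ℂ}
    (hab : gammaFactor r₁ r₂ D s * a = gammaFactor r₁ r₂ D (1 - s) * b) :
    (D : ℂ) ^ s * (2 * (π : ℂ)) ^ (-((r₁ + 2 * r₂ : ℕ) : ℂ) * s) * Gamma s ^ (r₁ + 2 * r₂) * a *
        trigFactor r₁ r₂ s =
      scaledDiscriminant r₁ r₂ D ^ (1 / 2 : ℂ) * (√π / 2) ^ r₁ * π ^ r₂ * b := by
  refine mul_left_cancel₀ (gammaFactor_ne_zero r₁ r₂ hD fun m ↦ by exact_mod_cast hs (-m)) ?_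
  linear_combination
    (D : ℂ) ^ s * (2 * (π : ℂ)) ^ (-((r₁ + 2 * r₂ : ℕ) : ℂ) * s) * Gamma s ^ (r₁ + 2 * r₂) *
      trigFactor r₁ r₂ s * hab +
    b * cpow_mul_Gamma_pow_mul_gammaFactor_one_sub r₁ r₂ hD (sin_pi_mul_ne_zero hs)

end NumberFieldZeta

open NumberFieldZeta in
/-- Number field analogue of the Chandrasekharan–Narasimhan identity.
`F` is a number field of degree `d = r₁ + 2r₂` with `|disc| = D`, and `ζF` denotes the
meromorphically continued Dedekind zeta function, characterized here by its completed
functional equation `Ω_F(s) = Ω_F(1-s)` away from the integers. For any integer `k`,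
`Λ_{F,k}(s) = D^s (2π)^{-ds} Γ(s)^d ζ_F(s) ζ_F(s+2k+1)` satisfies
`Λ_{F,k}(s) = (-1)^{k r₁ + r₂} Λ_{F,k}(-s-2k)`. -/
theorem lambda_functional_equation_numberField
    (r₁ r₂ : ℕ) (D : ℝ) (hD : 0 < D) (ζF : ℂ → ℂ)
    (hfe : ∀ s : ℂ, (∀ n : ℤ, s ≠ (n : ℂ)) →
      ((D : ℂ) / ((Real.pi : ℂ) ^ (r₁ + 2 * r₂) * 4 ^ r₂)) ^ (s / 2) *
          Complex.Gamma (s / 2) ^ r₁ * Complex.Gamma s ^ r₂ * ζF s =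
        ((D : ℂ) / ((Real.pi : ℂ) ^ (r₁ + 2 * r₂) * 4 ^ r₂)) ^ ((1 - s) / 2) *
          Complex.Gamma ((1 - s) / 2) ^ r₁ * Complex.Gamma (1 - s) ^ r₂ * ζF (1 - s))
    (k : ℤ) (Λ : ℂ → ℂ)
    (hΛ : ∀ s : ℂ, Λ s = (D : ℂ) ^ s * (2 * (Real.pi : ℂ)) ^ (-((r₁ + 2 * r₂ : ℕ) : ℂ) * s) *
      Complex.Gamma s ^ (r₁ + 2 * r₂) * ζF s * ζF (s + 2 * k + 1))
    (s : ℂ) (hs : ∀ n : ℤ, s ≠ (n : ℂ)) :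
    Λ s = (-1 : ℂ) ^ (k * r₁ + r₂) * Λ (-s - 2 * k) := by
  have hΛ_mul_trigFactor : ∀ z : ℂ, (∀ n : ℤ, z ≠ n) → Λ z * trigFactor r₁ r₂ z =
      scaledDiscriminant r₁ r₂ D ^ (1 / 2 : ℂ) * (√π / 2) ^ r₁ * π ^ r₂ *
        (ζF (1 - z) * ζF (z + 2 * k + 1)) := fun z hz ↦ by
    rw [hΛ, mul_assoc _ (ζF z)]
    refine mul_trigFactor_eq_of_gammaFactor_mul_eq r₁ r₂ hD hz ?_
    simp only [gammaFactor, scaledDiscriminant]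
    linear_combination ζF (z + 2 * k + 1) * hfe z hz
  have hw : ∀ n : ℤ, -s - 2 * k ≠ n := fun n h ↦
    hs (-n - 2 * k) (by push_cast; linear_combination -h)
  have hΛs := hΛ_mul_trigFactor s hs
  have hΛw := hΛ_mul_trigFactor _ hw
  rw [trigFactor_neg_sub_two_mul_int, show 1 - (-s - 2 * k) = s + 2 * k + 1 by ring,
    show -s - 2 * k + 2 * k + 1 = 1 - s by ring] at hΛw
  refine mul_right_cancel₀ (trigFactor_ne_zero r₁ r₂ (sin_pi_mul_ne_zero hs)) ?_
  linear_combination hΛs - hΛw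
end

section
/- For the completed function Λ_k(s) = (2π)^{-s} Γ(s) ζ(s) ζ(s+2k+1) with k an integer, one has Λ_k(s) = (-1)^k Λ_k(-s - 2k) for all complex s where both sides are defined. -/
/-!
With `ξ = completedRiemannZeta`, the duplication and reflection formulas for `Gammaℝ` give
`(2π)^{-s} Γ(s) ζ(s) = ξ(s) / (2 cos(πs/2) Γℝ(1 - s))`, hence
`Λ_k(s) = ξ(s) ξ(s+2k+1) / (2 cos(πs/2) Γℝ(1-s) Γℝ(s+2k+1))`.
Under `s ↦ -s - 2k` the two completed zeta values are exchanged by `ξ(1 - z) = ξ(z)`, the two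
`Γℝ` factors are exchanged, and `cos(πs/2)` is multiplied by `(-1)^k`.
-/

open Complex
open scoped Real

namespace Complex

lemma Gammaℝ_ne_zero_of_ne_intCast {s : ℂ} (hs : ∀ n : ℤ, s ≠ n) : Gammaℝ s ≠ 0 := by
  rw [Ne, Gammaℝ_eq_zero_iff]
  rintro ⟨n, rfl⟩
  exact hs (-(2 * n)) (by push_cast; ring)

end Complex

lemma two_pi_cpow_neg_mul_Gamma_mul_riemannZeta {s : ℂ} (hs : ∀ n : ℤ, s ≠ n) :
    (2 * π) ^ (-s) * Gamma s * riemannZeta s =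
      completedRiemannZeta s / (2 * cos (π * s / 2) * Gammaℝ (1 - s)) := by
  have hs₀ : s ≠ 0 := by simpa using hs 0
  have hG : Gammaℝ s ≠ 0 := Gammaℝ_ne_zero_of_ne_intCast hs
  have hG' : Gammaℝ (1 - s) ≠ 0 :=
    Gammaℝ_ne_zero_of_ne_intCast fun n h ↦ hs (1 - n) (by push_cast; linear_combination -h)
  have hduplication : (2 * π) ^ (-s) * Gamma s = Gammaℝ s * Gammaℝ (1 + s) / 2 := by
    rw [add_comm, Gammaℝ_mul_Gammaℝ_add_one, Gammaℂ_def]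
    ring
  rw [hduplication, riemannZeta_def_of_ne_zero hs₀, ← inv_inv (cos _),
    ← Gammaℝ_one_sub_mul_Gammaℝ_one_add]
  field_simp

/-- Chandrasekharan–Narasimhan identity: for `Λ_k(s) = (2π)^{-s} Γ(s) ζ(s) ζ(s+2k+1)`
with `k` an integer, `Λ_k(s) = (-1)^k Λ_k(-s-2k)` wherever both sides are defined. -/
theorem lambda_functional_equation (k : ℤ) (Λ : ℂ → ℂ)
    (hΛ : ∀ s : ℂ, Λ s = (2 * (Real.pi : ℂ)) ^ (-s) * Complex.Gamma s *
      riemannZeta s * riemannZeta (s + 2 * k + 1))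
    (s : ℂ) (hs : ∀ n : ℤ, s ≠ (n : ℂ)) :
    Λ s = (-1 : ℂ) ^ k * Λ (-s - 2 * k) := by
  have hs' : ∀ n : ℤ, -s - 2 * k ≠ n :=
    fun n h ↦ hs (-n - 2 * k) (by push_cast; linear_combination -h)
  have hw₀ : s + 2 * k + 1 ≠ 0 := fun h ↦ hs (-2 * k - 1) (by push_cast; linear_combination h)
  have hs₀ : 1 - s ≠ 0 := fun h ↦ hs 1 (by push_cast; linear_combination -h)
  have hcos : cos (π * (-s - 2 * k) / 2) = (-1) ^ k * cos (π * s / 2) := by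
    rw [← cos_neg, ← cos_add_int_mul_pi]
    ring_nf
  rw [hΛ, hΛ, two_pi_cpow_neg_mul_Gamma_mul_riemannZeta hs,
    two_pi_cpow_neg_mul_Gamma_mul_riemannZeta hs', hcos,
    show -s - 2 * k + 2 * k + 1 = 1 - s by ring, riemannZeta_def_of_ne_zero hw₀,
    riemannZeta_def_of_ne_zero hs₀, completedRiemannZeta_one_sub,
    show -s - 2 * k = 1 - (s + 2 * k + 1) by ring, completedRiemannZeta_one_sub,
    show 1 - (1 - (s + 2 * k + 1)) = s + 2 * k + 1 by ring]
  field_simp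
end
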